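/- Let (f_n) be a sequence of holomorphic self-maps of the open unit disc D and let a, b be distinct points of D. If the series Σ_n ρ(f_n(a), a) and Σ_n ρ(f_n(b), b) both converge, then for every z in D the series Σ_n ρ(f_n(z), z) converges. -/

import Mathlib

/-!
For self-maps `f` of the disc that nearly fix `a`, conjugate by disc automorphisms to
`F = φ_{f a} ∘ f ∘ φ_a⁻¹`, where `φ_c w = (w - c) / (1 - c̄ w)`. Then `F 0 = 0`, so by Schwarz
`F w = w h(w)` with `‖h‖ ≤ 1`, and `1 - h` has nonnegative real part. Harnack's inequality for
such functions transfers the smallness of `1 - h` at `φ_a b ≠ 0`, where it is controlled by the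
displacements of `f` at `a` and `b`, to `φ_a z`. This bounds `‖f z - z‖` linearly by
`‖f a - a‖ + ‖f b - b‖`. At small scales euclidean and hyperbolic displacements are comparable,
so `ρ(fₙ z, z)` is eventually at most a constant times `ρ(fₙ a, a) + ρ(fₙ b, b)`.
-/

open Complex Metric Set

noncomputable def rho (u v : ℂ) : ℝ :=
  2 * Real.arsinh (‖u - v‖ /
    Real.sqrt ((1 - ‖u‖ ^ 2) * (1 - ‖v‖ ^ 2)))

open Filter Topology ComplexConjugate

noncomputable def mobius (c w : ℂ) : ℂ := (w - c) / (1 - conj c * w)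

section Mobius

variable {c c' w w' : ℂ}

lemma one_sub_norm_mul_norm_le_norm (c w : ℂ) : 1 - ‖c‖ * ‖w‖ ≤ ‖1 - conj c * w‖ := by
  simpa using norm_sub_norm_le (1 : ℂ) (conj c * w)

lemma one_sub_conj_mul_ne_zero (hc : ‖c‖ < 1) (hw : ‖w‖ ≤ 1) : 1 - conj c * w ≠ 0 := by
  rw [← norm_pos_iff]
  nlinarith [one_sub_norm_mul_norm_le_norm c w, norm_nonneg c, norm_nonneg w]

lemma norm_one_sub_conj_mul_sq_sub_norm_sub_sq (c w : ℂ) :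
    ‖1 - conj c * w‖ ^ 2 - ‖w - c‖ ^ 2 = (1 - ‖c‖ ^ 2) * (1 - ‖w‖ ^ 2) := by
  simp only [Complex.sq_norm, normSq_apply, sub_re, sub_im, mul_re, mul_im, conj_re, conj_im,
    one_re, one_im]
  ring

lemma norm_mobius_lt_one (hc : ‖c‖ < 1) (hw : ‖w‖ < 1) : ‖mobius c w‖ < 1 := by
  have hD := one_sub_conj_mul_ne_zero hc hw.le
  rw [mobius, norm_div, div_lt_one (norm_pos_iff.2 hD)]
  have := norm_one_sub_conj_mul_sq_sub_norm_sub_sq c w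
  have hpos : 0 < (1 - ‖c‖ ^ 2) * (1 - ‖w‖ ^ 2) := by
    apply mul_pos <;> nlinarith [norm_nonneg c, norm_nonneg w]
  nlinarith [norm_nonneg (w - c), norm_nonneg (1 - conj c * w)]

@[simp]
lemma mobius_self (c : ℂ) : mobius c c = 0 := by simp [mobius]

@[simp]
lemma mobius_neg_zero (c : ℂ) : mobius (-c) 0 = c := by simp [mobius]

lemma mobius_neg_mobius (hc : ‖c‖ < 1) (hw : ‖w‖ ≤ 1) : mobius (-c) (mobius c w) = w := by
  have hD := one_sub_conj_mul_ne_zero hc hw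
  have hcc : 1 - conj c * c ≠ 0 := one_sub_conj_mul_ne_zero hc hc.le
  have hnum : mobius c w + c = w * (1 - conj c * c) / (1 - conj c * w) := by
    rw [mobius, div_add' _ _ _ hD]; ring_nf
  have hden : 1 + conj c * mobius c w = (1 - conj c * c) / (1 - conj c * w) := by
    rw [mobius, mul_div_assoc', add_div' _ _ _ hD]; ring_nf
  rw [mobius, map_neg, sub_neg_eq_add, neg_mul, sub_neg_eq_add, hnum, hden,
    div_div_div_cancel_right₀ hD, mul_div_assoc, div_self hcc, mul_one]

lemma differentiableOn_mobius (hc : ‖c‖ < 1) : DifferentiableOn ℂ (mobius c) (ball 0 1) :=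
  (differentiableOn_id.sub_const c).div ((differentiableOn_const 1).sub
    (differentiableOn_id.const_mul _))
    fun _ hw ↦ one_sub_conj_mul_ne_zero hc (mem_ball_zero_iff.1 hw).le

lemma mapsTo_mobius (hc : ‖c‖ < 1) : MapsTo (mobius c) (ball 0 1) (ball 0 1) := fun _ hw ↦
  mem_ball_zero_iff.2 (norm_mobius_lt_one hc (mem_ball_zero_iff.1 hw))

lemma norm_mobius_sub_mobius_le {R : ℝ} (hR : R < 1) (hc : ‖c‖ ≤ R) (hc' : ‖c'‖ ≤ R)
    (hw : ‖w‖ ≤ 1) (hw' : ‖w'‖ ≤ 1) :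
    ‖mobius c w - mobius c' w'‖ ≤ 4 * (‖c - c'‖ + ‖w - w'‖) / (1 - R) ^ 2 := by
  have hD := one_sub_conj_mul_ne_zero (hc.trans_lt hR) hw
  have hD' := one_sub_conj_mul_ne_zero (hc'.trans_lt hR) hw'
  have key : mobius c w - mobius c' w' = ((w - w') * (1 - c * conj c')
      + (c - c') * (conj c * w - 1) + conj (c - c') * (w * w' - c * w))
      / ((1 - conj c * w) * (1 - conj c' * w')) := by
    rw [mobius, mobius, div_sub_div _ _ hD hD', map_sub]
    ring
  have h1 : ‖1 - c * conj c'‖ ≤ 2 := by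
    have := norm_sub_le (1 : ℂ) (c * conj c')
    rw [norm_one, norm_mul, norm_conj] at this
    nlinarith [norm_nonneg c, norm_nonneg c']
  have h2 : ‖conj c * w - 1‖ ≤ 2 := by
    have := norm_sub_le (conj c * w) 1
    rw [norm_one, norm_mul, norm_conj] at this
    nlinarith [norm_nonneg c, norm_nonneg w]
  have h3 : ‖w * w' - c * w‖ ≤ 2 := by
    have := norm_sub_le (w * w') (c * w)
    rw [norm_mul, norm_mul] at this
    nlinarith [norm_nonneg c, norm_nonneg w, norm_nonneg w']
  have hden (d u : ℂ) (hd : ‖d‖ ≤ R) (hu : ‖u‖ ≤ 1) : 1 - R ≤ ‖1 - conj d * u‖ := by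
    nlinarith [one_sub_norm_mul_norm_le_norm d u, norm_nonneg d, norm_nonneg u]
  rw [key, norm_div, norm_mul]
  gcongr ?_ / ?_
  · calc _ ≤ ‖w - w'‖ * ‖1 - c * conj c'‖ + ‖c - c'‖ * ‖conj c * w - 1‖
            + ‖c - c'‖ * ‖w * w' - c * w‖ := by
          refine (norm_add₃_le ..).trans_eq ?_
          rw [norm_mul, norm_mul, norm_mul, norm_conj]
      _ ≤ ‖w - w'‖ * 2 + ‖c - c'‖ * 2 + ‖c - c'‖ * 2 := by gcongr
      _ ≤ 4 * (‖c - c'‖ + ‖w - w'‖) := by linarith [norm_nonneg (w - w')]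
  · rw [sq]
    exact mul_le_mul (hden c w hc hw) (hden c' w' hc' hw') (by linarith) (norm_nonneg _)

end Mobius

lemma norm_le_norm_mobius_of_map_eq_zero {g : ℂ → ℂ} (hg : DifferentiableOn ℂ g (ball 0 1))
    (hm : MapsTo g (ball 0 1) (ball 0 1)) {p q : ℂ} (hp : p ∈ ball (0 : ℂ) 1)
    (hq : q ∈ ball (0 : ℂ) 1) (hgp : g p = 0) : ‖g q‖ ≤ ‖mobius p q‖ := by
  rw [mem_ball_zero_iff] at hp hq
  have hp' : ‖-p‖ < 1 := by rwa [norm_neg]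
  have := Complex.norm_le_norm_of_mapsTo_ball (f := g ∘ mobius (-p))
    (hg.comp (differentiableOn_mobius hp') (mapsTo_mobius hp'))
    ((hm.comp (mapsTo_mobius hp')).mono_right ball_subset_closedBall)
    (by simp [hgp]) (norm_mobius_lt_one hp hq)
  rwa [Function.comp_apply, mobius_neg_mobius hp hq.le] at this

lemma norm_sub_lt_norm_add_conj {A B : ℂ} (hA : 0 < A.re) (hB : 0 < B.re) :
    ‖A - B‖ < ‖A + conj B‖ := by
  refine lt_of_pow_lt_pow_left₀ 2 (norm_nonneg _) ?_
  simp only [Complex.sq_norm, normSq_apply, sub_re, sub_im, add_re, add_im, conj_re, conj_im]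
  nlinarith [mul_pos hA hB]

section Harnack

variable {k : ℂ → ℂ} {p q : ℂ}

lemma harnack_norm_of_re_pos (hk : DifferentiableOn ℂ k (ball 0 1))
    (hre : ∀ w ∈ ball (0 : ℂ) 1, 0 < (k w).re) (hp : p ∈ ball (0 : ℂ) 1)
    (hq : q ∈ ball (0 : ℂ) 1) :
    (1 - ‖mobius p q‖) * ‖k q‖ ≤ (1 + ‖mobius p q‖) * ‖k p‖ := by
  have hden : ∀ w ∈ ball (0 : ℂ) 1, k w + conj (k p) ≠ 0 := fun w hw h ↦ by
    have := congrArg re h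
    rw [add_re, conj_re, zero_re] at this
    linarith [hre w hw, hre p hp]
  -- the Cayley map of the right half-plane sending `k p` to `0` turns `k` into a self-map of
  -- the disc vanishing at `p`
  have hG := norm_le_norm_mobius_of_map_eq_zero (g := fun w ↦ (k w - k p) / (k w + conj (k p)))
    ((hk.sub_const _).div (hk.add_const _) hden) (fun w hw ↦ ?_) hp hq (by simp)
  · rw [norm_div, div_le_iff₀ (norm_pos_iff.2 (hden q hq))] at hG
    have := norm_add_le (k q) (conj (k p))
    rw [norm_conj] at this
    nlinarith [norm_sub_norm_le (k q) (k p), norm_nonneg (mobius p q)]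
  · rw [mem_ball_zero_iff, norm_div, div_lt_one (norm_pos_iff.2 (hden w hw))]
    exact norm_sub_lt_norm_add_conj (hre w hw) (hre p hp)

lemma harnack_norm_of_re_nonneg (hk : DifferentiableOn ℂ k (ball 0 1))
    (hre : ∀ w ∈ ball (0 : ℂ) 1, 0 ≤ (k w).re) (hp : p ∈ ball (0 : ℂ) 1)
    (hq : q ∈ ball (0 : ℂ) 1) :
    (1 - ‖mobius p q‖) * ‖k q‖ ≤ (1 + ‖mobius p q‖) * ‖k p‖ := by
  have hr : ‖mobius p q‖ < 1 :=
    norm_mobius_lt_one (mem_ball_zero_iff.1 hp) (mem_ball_zero_iff.1 hq)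
  refine le_of_forall_pos_le_add fun ε hε ↦ ?_
  have hδ : ‖((ε / 2 : ℝ) : ℂ)‖ = ε / 2 := by rw [norm_real, Real.norm_of_nonneg (by positivity)]
  have h := harnack_norm_of_re_pos (k := fun w ↦ k w + (ε / 2 : ℝ)) (hk.add_const _)
    (fun w hw ↦ by rw [add_re, ofReal_re]; linarith [hre w hw]) hp hq
  have hq' := norm_sub_le (k q + (ε / 2 : ℝ)) (ε / 2 : ℝ)
  have hp' := norm_add_le (k p) (ε / 2 : ℝ)
  rw [add_sub_cancel_right, hδ] at hq'
  rw [hδ] at hp'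
  nlinarith [norm_nonneg (mobius p q)]

end Harnack

lemma mul_norm_sub_self_le_of_map_zero {F : ℂ → ℂ} (hF : DifferentiableOn ℂ F (ball 0 1))
    (hm : MapsTo F (ball 0 1) (ball 0 1)) (h0 : F 0 = 0) {p q : ℂ} (hp : p ∈ ball (0 : ℂ) 1)
    (hq : q ∈ ball (0 : ℂ) 1) :
    (1 - ‖mobius p q‖) * ‖p‖ * ‖F q - q‖ ≤ (1 + ‖mobius p q‖) * ‖F p - p‖ := by
  set h := dslope F 0
  have hFh (w : ℂ) : F w - w = w * (h w - 1) := by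
    have := sub_smul_dslope F 0 w
    rw [sub_zero, smul_eq_mul, h0, sub_zero] at this
    rw [mul_sub, this, mul_one]
  have hh : ∀ w ∈ ball (0 : ℂ) 1, ‖h w‖ ≤ 1 := fun w hw ↦ by
    simpa using norm_dslope_le_div_of_mapsTo_ball hF
      (by rw [h0]; exact hm.mono_right ball_subset_closedBall) hw
  have harnack := harnack_norm_of_re_nonneg (k := fun w ↦ 1 - h w)
    ((differentiableOn_const 1).sub
      ((differentiableOn_dslope (isOpen_ball.mem_nhds (mem_ball_self one_pos))).2 hF))
    (fun w hw ↦ by simpa using (re_le_norm (h w)).trans (hh w hw)) hp hq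
  have hr : ‖mobius p q‖ < 1 :=
    norm_mobius_lt_one (mem_ball_zero_iff.1 hp) (mem_ball_zero_iff.1 hq)
  have hq1 : ‖q‖ ≤ 1 := (mem_ball_zero_iff.1 hq).le
  rw [hFh, hFh, norm_mul, norm_mul, norm_sub_rev (h q), norm_sub_rev (h p)]
  calc (1 - ‖mobius p q‖) * ‖p‖ * (‖q‖ * ‖1 - h q‖)
      ≤ ‖p‖ * ((1 - ‖mobius p q‖) * ‖1 - h q‖) := by
        have : 0 ≤ (1 - ‖mobius p q‖) * ‖p‖ * ‖1 - h q‖ := by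
          have := norm_nonneg p; have := norm_nonneg (1 - h q); positivity
        nlinarith
    _ ≤ ‖p‖ * ((1 + ‖mobius p q‖) * ‖1 - h p‖) := by gcongr
    _ = (1 + ‖mobius p q‖) * (‖p‖ * ‖1 - h p‖) := by ring

noncomputable def mobiusConj (f : ℂ → ℂ) (a : ℂ) : ℂ → ℂ := mobius (f a) ∘ f ∘ mobius (-a)

section MobiusConj

variable {f : ℂ → ℂ} {a w : ℂ} {R : ℝ}

@[simp]
lemma mobiusConj_zero : mobiusConj f a 0 = 0 := by simp [mobiusConj]

lemma mobiusConj_mobius (ha : ‖a‖ < 1) (hw : ‖w‖ ≤ 1) :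
    mobiusConj f a (mobius a w) = mobius (f a) (f w) := by
  simp [mobiusConj, mobius_neg_mobius ha hw]

lemma differentiableOn_mobiusConj (hf : DifferentiableOn ℂ f (ball 0 1))
    (hm : MapsTo f (ball 0 1) (ball 0 1)) (ha : ‖a‖ < 1) (hfa : ‖f a‖ < 1) :
    DifferentiableOn ℂ (mobiusConj f a) (ball 0 1) :=
  have ha' : ‖-a‖ < 1 := by rwa [norm_neg]
  (differentiableOn_mobius hfa).comp (hf.comp (differentiableOn_mobius ha') (mapsTo_mobius ha'))
    (hm.comp (mapsTo_mobius ha'))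

lemma mapsTo_mobiusConj (hm : MapsTo f (ball 0 1) (ball 0 1)) (ha : ‖a‖ < 1) (hfa : ‖f a‖ < 1) :
    MapsTo (mobiusConj f a) (ball 0 1) (ball 0 1) :=
  (mapsTo_mobius hfa).comp (hm.comp (mapsTo_mobius (by rwa [norm_neg])))

lemma norm_mobiusConj_sub_self_le (hm : MapsTo f (ball 0 1) (ball 0 1)) (hR : R < 1)
    (ha : ‖a‖ ≤ R) (hfa : ‖f a‖ ≤ R) (hw : ‖w‖ < 1) :
    ‖mobiusConj f a (mobius a w) - mobius a w‖ ≤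
      4 / (1 - R) ^ 2 * (‖f a - a‖ + ‖f w - w‖) := by
  rw [mobiusConj_mobius (ha.trans_lt hR) hw.le, ← mul_div_right_comm]
  exact norm_mobius_sub_mobius_le hR hfa ha (mem_ball_zero_iff.1 (hm (mem_ball_zero_iff.2 hw))).le
    hw.le

lemma norm_sub_self_le_mobiusConj (hm : MapsTo f (ball 0 1) (ball 0 1)) (hR : R < 1)
    (ha : ‖a‖ ≤ R) (hfa : ‖f a‖ ≤ R) (hw : ‖w‖ < 1) :
    ‖f w - w‖ ≤
      4 / (1 - R) ^ 2 * (‖f a - a‖ + ‖mobiusConj f a (mobius a w) - mobius a w‖) := by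
  have hfw : ‖f w‖ < 1 := mem_ball_zero_iff.1 (hm (mem_ball_zero_iff.2 hw))
  have hF := mobiusConj_mobius (f := f) (ha.trans_lt hR) hw.le
  have := norm_mobius_sub_mobius_le hR (c := -f a) (c' := -a) (by rwa [norm_neg])
    (by rwa [norm_neg]) (norm_mobius_lt_one (hfa.trans_lt hR) hfw).le
    (norm_mobius_lt_one (ha.trans_lt hR) hw).le
  rw [hF]
  rwa [mobius_neg_mobius (hfa.trans_lt hR) hfw.le, mobius_neg_mobius (ha.trans_lt hR) hw.le,
    neg_sub_neg, norm_sub_rev a, mul_div_right_comm] at this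

end MobiusConj

lemma exists_norm_sub_self_le {a b z : ℂ} (ha : ‖a‖ < 1) (hb : ‖b‖ < 1) (hz : ‖z‖ < 1)
    (hab : a ≠ b) :
    ∃ C ε : ℝ, 0 < C ∧ 0 < ε ∧ ∀ f : ℂ → ℂ, DifferentiableOn ℂ f (ball 0 1) →
      MapsTo f (ball 0 1) (ball 0 1) → ‖f a - a‖ ≤ ε →
      ‖f z - z‖ ≤ C * (‖f a - a‖ + ‖f b - b‖) := by
  obtain ⟨R, hR, haR, hRdef⟩ : ∃ R, R < 1 ∧ ‖a‖ ≤ R ∧ R = (1 + ‖a‖) / 2 :=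
    ⟨_, by linarith, by linarith, rfl⟩
  set K := 4 / (1 - R) ^ 2
  set b' := mobius a b
  set z' := mobius a z
  have hb' : ‖b'‖ < 1 := norm_mobius_lt_one ha hb
  have hb'0 : 0 < ‖b'‖ := norm_pos_iff.2 <|
    div_ne_zero (sub_ne_zero.2 hab.symm) (one_sub_conj_mul_ne_zero ha hb.le)
  have hr : ‖mobius b' z'‖ < 1 := norm_mobius_lt_one hb' (norm_mobius_lt_one ha hz)
  set M := (1 + ‖mobius b' z'‖) / ((1 - ‖mobius b' z'‖) * ‖b'‖)
  have hM : 0 ≤ M := div_nonneg (by positivity) (mul_nonneg (by linarith) hb'0.le)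
  refine ⟨K * (1 + M * K), (1 - ‖a‖) / 2, by positivity, by linarith, fun f hf hm hfa ↦ ?_⟩
  have hc : ‖f a‖ ≤ R := by linarith [norm_le_norm_add_norm_sub' (f a) a]
  have hc1 : ‖f a‖ < 1 := hc.trans_lt hR
  set F := mobiusConj f a
  have harnack := mul_norm_sub_self_le_of_map_zero
    (differentiableOn_mobiusConj hf hm ha hc1) (mapsTo_mobiusConj hm ha hc1) mobiusConj_zero (mem_ball_zero_iff.2 hb') (mem_ball_zero_iff.2 (norm_mobius_lt_one ha hz))
  have hz_est : ‖F z' - z'‖ ≤ M * (K * (‖f a - a‖ + ‖f b - b‖)) := by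
    rw [div_mul_eq_mul_div, le_div_iff₀ (mul_pos (by linarith) hb'0)]
    calc _ = (1 - ‖mobius b' z'‖) * ‖b'‖ * ‖F z' - z'‖ := by ring
      _ ≤ (1 + ‖mobius b' z'‖) * ‖F b' - b'‖ := harnack
      _ ≤ (1 + ‖mobius b' z'‖) * (K * (‖f a - a‖ + ‖f b - b‖)) := by
        gcongr; exact norm_mobiusConj_sub_self_le hm hR haR hc hb
  calc ‖f z - z‖ ≤ K * (‖f a - a‖ + ‖F z' - z'‖) := norm_sub_self_le_mobiusConj hm hR haR hc hz
    _ ≤ K * ((‖f a - a‖ + ‖f b - b‖) + M * (K * (‖f a - a‖ + ‖f b - b‖))) := by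
        gcongr
        exact le_add_of_nonneg_right (norm_nonneg _)
    _ = K * (1 + M * K) * (‖f a - a‖ + ‖f b - b‖) := by ring

lemma Real.sinh_le_two_mul {x : ℝ} (h0 : 0 ≤ x) (h1 : x ≤ 1) : Real.sinh x ≤ 2 * x := by
  have hpos := Real.abs_exp_sub_one_le (x := x) (by rwa [abs_of_nonneg h0])
  have hneg := Real.abs_exp_sub_one_le (x := -x) (by rwa [abs_neg, abs_of_nonneg h0])
  rw [abs_le] at hpos hneg
  rw [abs_neg, abs_of_nonneg h0] at hneg
  rw [abs_of_nonneg h0] at hpos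
  rw [Real.sinh_eq]
  linarith

lemma Real.arsinh_le_self {x : ℝ} (hx : 0 ≤ x) : Real.arsinh x ≤ x := by
  simpa using Real.arsinh_le_arsinh.2 (Real.self_le_sinh_iff.2 hx)

lemma rho_nonneg (u v : ℂ) : 0 ≤ rho u v := by
  unfold rho
  have := Real.arsinh_nonneg_iff.2
    (by positivity : 0 ≤ ‖u - v‖ / Real.sqrt ((1 - ‖u‖ ^ 2) * (1 - ‖v‖ ^ 2)))
  linarith

lemma norm_sub_le_sinh_half_rho {u v : ℂ} (hu : ‖u‖ < 1) (hv : ‖v‖ < 1) :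
    ‖u - v‖ ≤ Real.sinh (rho u v / 2) := by
  rw [rho, mul_div_cancel_left₀ _ two_ne_zero, Real.sinh_arsinh]
  refine le_div_self (norm_nonneg _) (Real.sqrt_pos.2 ?_) (Real.sqrt_le_one.2 ?_)
  · apply mul_pos <;> nlinarith [norm_nonneg u, norm_nonneg v]
  · exact mul_le_one₀ (by nlinarith [norm_nonneg u]) (by nlinarith [norm_nonneg v])
      (by nlinarith [norm_nonneg v])

lemma norm_sub_le_rho {u v : ℂ} (hu : ‖u‖ < 1) (hv : ‖v‖ < 1) (h : rho u v ≤ 2) :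
    ‖u - v‖ ≤ rho u v := by
  have := Real.sinh_le_two_mul (x := rho u v / 2) (by linarith [rho_nonneg u v]) (by linarith)
  linarith [norm_sub_le_sinh_half_rho hu hv]

lemma rho_le_of_norm_sub_le {u v : ℂ} (hv : ‖v‖ < 1) (huv : ‖u - v‖ ≤ (1 - ‖v‖) / 2) :
    rho u v ≤ 4 / (1 - ‖v‖) * ‖u - v‖ := by
  have hu : ‖u‖ ≤ ‖v‖ + (1 - ‖v‖) / 2 := by linarith [norm_le_norm_add_norm_sub' u v]
  have hδu : (1 - ‖v‖) / 2 ≤ 1 - ‖u‖ ^ 2 := by nlinarith [norm_nonneg u]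
  have hδv : (1 - ‖v‖) / 2 ≤ 1 - ‖v‖ ^ 2 := by nlinarith [norm_nonneg v]
  have hsqrt : (1 - ‖v‖) / 2 ≤ Real.sqrt ((1 - ‖u‖ ^ 2) * (1 - ‖v‖ ^ 2)) := by
    rw [Real.le_sqrt (by linarith) (by nlinarith)]
    rw [sq]
    exact mul_le_mul hδu hδv (by linarith) (by linarith)
  calc rho u v ≤ 2 * (‖u - v‖ / Real.sqrt ((1 - ‖u‖ ^ 2) * (1 - ‖v‖ ^ 2))) := by
        rw [rho]; gcongr; exact Real.arsinh_le_self (by positivity)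
    _ ≤ 2 * (‖u - v‖ / ((1 - ‖v‖) / 2)) := by gcongr
    _ = 4 / (1 - ‖v‖) * ‖u - v‖ := by field_simp; ring

lemma exists_rho_le {a b z : ℂ} (ha : ‖a‖ < 1) (hb : ‖b‖ < 1) (hz : ‖z‖ < 1) (hab : a ≠ b) :
    ∃ C δ : ℝ, 0 < δ ∧ ∀ f : ℂ → ℂ, DifferentiableOn ℂ f (ball 0 1) →
      MapsTo f (ball 0 1) (ball 0 1) → rho (f a) a + rho (f b) b ≤ δ →
      rho (f z) z ≤ C * (rho (f a) a + rho (f b) b) := by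
  obtain ⟨C, ε, hC, hε, hest⟩ := exists_norm_sub_self_le ha hb hz hab
  refine ⟨4 / (1 - ‖z‖) * C, min (min 2 ε) ((1 - ‖z‖) / (2 * C)),
    lt_min (lt_min two_pos hε) (div_pos (by linarith) (by positivity)), fun f hf hm hsum ↦ ?_⟩
  simp only [le_min_iff] at hsum
  obtain ⟨⟨hsum2, hsumε⟩, hsumz⟩ := hsum
  have hfw {w : ℂ} (hw : ‖w‖ < 1) : ‖f w‖ < 1 := mem_ball_zero_iff.1 (hm (mem_ball_zero_iff.2 hw))
  have hρa := rho_nonneg (f a) a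
  have hρb := rho_nonneg (f b) b
  have hfa := norm_sub_le_rho (hfw ha) ha (by linarith)
  have hfb := norm_sub_le_rho (hfw hb) hb (by linarith)
  have hfz : ‖f z - z‖ ≤ C * (rho (f a) a + rho (f b) b) :=
    (hest f hf hm (by linarith)).trans (by gcongr)
  have hfz' : ‖f z - z‖ ≤ (1 - ‖z‖) / 2 := by
    rw [le_div_iff₀ (by positivity)] at hsumz
    linarith
  calc rho (f z) z ≤ 4 / (1 - ‖z‖) * ‖f z - z‖ := rho_le_of_norm_sub_le hz hfz'
    _ ≤ 4 / (1 - ‖z‖) * (C * (rho (f a) a + rho (f b) b)) := by gcongr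
    _ = _ := by ring

/-- If `(fₙ)` is a sequence of holomorphic self-maps of the disc and the series
`Σ ρ(fₙ(a),a)` and `Σ ρ(fₙ(b),b)` converge for two distinct points `a, b` of
the disc, then `Σ ρ(fₙ(z),z)` converges for every `z` in the disc. -/
theorem summable_two_points_implies_summable (f : ℕ → ℂ → ℂ)
    (hf : ∀ n, DifferentiableOn ℂ (f n) (ball (0:ℂ) 1))
    (hmaps : ∀ n, MapsTo (f n) (ball (0:ℂ) 1) (ball (0:ℂ) 1))
    (a b : ℂ) (ha : a ∈ ball (0:ℂ) 1) (hb : b ∈ ball (0:ℂ) 1) (hab : a ≠ b)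
    (hsa : Summable fun n => rho (f n a) a)
    (hsb : Summable fun n => rho (f n b) b) :
    ∀ z ∈ ball (0:ℂ) 1, Summable fun n => rho (f n z) z := by
  intro z hz
  rw [mem_ball_zero_iff] at ha hb hz
  obtain ⟨C, δ, hδ, hρ⟩ := exists_rho_le ha hb hz hab
  have hlim : Tendsto (fun n ↦ rho (f n a) a + rho (f n b) b) atTop (𝓝 0) := by
    simpa using hsa.tendsto_atTop_zero.add hsb.tendsto_atTop_zero
  refine Summable.of_norm_bounded_eventually_nat ((hsa.add hsb).mul_left C) ?_
  filter_upwards [hlim.eventually (eventually_le_nhds hδ)] with n hn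
  rw [Real.norm_of_nonneg (rho_nonneg _ _)]
  exact hρ (f n) (hf n) (hmaps n) hn
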